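/- arXiv:2407.07182 — 6 statements merged into one kernel-verified Lean document; each statement's English description precedes it below -/
import Mathlib

section
/- If G is a graph with n vertices and m edges and no isolated vertex, then γ_SR(G) ≥ (3n - 4m)/2. -/
open scoped Classical
open Finset SimpleGraph

/-- A signed Roman dominating function on `G`: values in {-1,1,2}, every closed
neighborhood sums to at least 1, and every vertex valued -1 has a neighbor valued 2. -/
def IsSRDF {V : Type*} [Fintype V] (G : SimpleGraph V) (f : V → ℤ) : Prop :=
  (∀ v, f v = -1 ∨ f v = 1 ∨ f v = 2) ∧
  (∀ u, 1 ≤ f u + ∑ v ∈ Finset.univ.filter (G.Adj u), f v) ∧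
  (∀ u, f u = -1 → ∃ v, G.Adj u v ∧ f v = 2)

/-- The signed Roman domination number: minimum weight of an SRDF. -/
noncomputable def gammaSR {V : Type*} [Fintype V] (G : SimpleGraph V) : ℤ :=
  sInf {w | ∃ f, IsSRDF G f ∧ ∑ v, f v = w}

/-- The ladder graph `P₂ □ Pₙ`. -/
def ladderGraph (n : ℕ) : SimpleGraph (Fin 2 × Fin n) :=
  (SimpleGraph.pathGraph 2).boxProd (SimpleGraph.pathGraph n)

/-- The circular ladder graph `P₂ □ Cₙ`. -/
def circLadder (n : ℕ) : SimpleGraph (Fin 2 × Fin n) :=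
  (SimpleGraph.pathGraph 2).boxProd (SimpleGraph.cycleGraph n)

private lemma srdf_key {V : Type*} [Fintype V] (G : SimpleGraph V)
    (h : ∀ v : V, ∃ u, G.Adj v u) (f : V → ℤ) (hf : IsSRDF G f) :
    3 * (Fintype.card V : ℤ) - 4 * (G.edgeFinset.card : ℤ) ≤ 2 * ∑ v, f v := by
  obtain ⟨hval, hcl, -⟩ := hf
  have hswap : ∑ u, ∑ v ∈ Finset.univ.filter (G.Adj u), f v
      = ∑ v, (G.degree v : ℤ) * f v := by
    simp only [Finset.sum_filter]
    rw [Finset.sum_comm]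
    refine Finset.sum_congr rfl fun v _ => ?_
    have : ∀ u : V, (if G.Adj u v then f v else 0) = (if G.Adj v u then f v else 0) := by
      intro u; rw [G.adj_comm]
    simp_rw [this, ← Finset.sum_filter, Finset.sum_const, nsmul_eq_mul]
    congr 2
    have he : Finset.univ.filter (fun a => G.Adj v a) = G.neighborFinset v := by
      ext u; simp
    rw [he, SimpleGraph.degree]
  have hA : (Fintype.card V : ℤ) ≤ ∑ v, f v + ∑ v, (G.degree v : ℤ) * f v := by
    calc (Fintype.card V : ℤ) = ∑ _v : V, (1 : ℤ) := by simp
    _ ≤ ∑ u, (f u + ∑ v ∈ Finset.univ.filter (G.Adj u), f v) :=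
        Finset.sum_le_sum fun u _ => hcl u
    _ = ∑ v, f v + ∑ v, (G.degree v : ℤ) * f v := by
        rw [Finset.sum_add_distrib, hswap]
  have hB : ∑ v, (2 - f v) ≤ ∑ v, (G.degree v : ℤ) * (2 - f v) := by
    refine Finset.sum_le_sum fun v _ => ?_
    have hd : (1 : ℤ) ≤ (G.degree v : ℤ) := by
      have := (G.degree_pos_iff_exists_adj v).2 (h v)
      exact_mod_cast this
    have hfv : (0 : ℤ) ≤ 2 - f v := by rcases hval v with h1 | h1 | h1 <;> omega
    nlinarith
  have hdegsum : ∑ v, (G.degree v : ℤ) = 2 * (G.edgeFinset.card : ℤ) := by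
    exact_mod_cast congrArg (Nat.cast : ℕ → ℤ) (G.sum_degrees_eq_twice_card_edges)
  have hB' : 2 * (Fintype.card V : ℤ) - ∑ v, f v
      ≤ 4 * (G.edgeFinset.card : ℤ) - ∑ v, (G.degree v : ℤ) * f v := by
    have h1 : ∑ v, (2 - f v) = 2 * (Fintype.card V : ℤ) - ∑ v, f v := by
      rw [Finset.sum_sub_distrib]; simp [mul_comm]
    have h2 : ∑ v, (G.degree v : ℤ) * (2 - f v)
        = 4 * (G.edgeFinset.card : ℤ) - ∑ v, (G.degree v : ℤ) * f v := by
      simp_rw [mul_sub, Finset.sum_sub_distrib, ← Finset.sum_mul, hdegsum]; ring_nf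
    rw [h1, h2] at hB
    exact hB
  linarith

theorem stmt1 {V : Type*} [Fintype V] (G : SimpleGraph V)
    (h : ∀ v : V, ∃ u, G.Adj v u) :
    ((3 * (Fintype.card V : ℚ) - 4 * (G.edgeFinset.card : ℚ)) / 2) ≤ (gammaSR G : ℚ) := by
  have hne : {w : ℤ | ∃ f, IsSRDF G f ∧ ∑ v, f v = w}.Nonempty := by
    refine ⟨∑ _v : V, (1 : ℤ), fun _ => 1, ⟨fun v => Or.inr (Or.inl rfl), fun u => ?_, ?_⟩, rfl⟩
    · show (1 : ℤ) ≤ 1 + ∑ _v ∈ Finset.univ.filter (G.Adj u), (1 : ℤ)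
      have : (0 : ℤ) ≤ ∑ _v ∈ Finset.univ.filter (G.Adj u), (1 : ℤ) := by positivity
      linarith
    · intro u hu; simp at hu
  have hbdd : BddBelow {w : ℤ | ∃ f, IsSRDF G f ∧ ∑ v, f v = w} := by
    refine ⟨-(Fintype.card V : ℤ), fun w hw => ?_⟩
    obtain ⟨f, ⟨hval, -, -⟩, rfl⟩ := hw
    calc -(Fintype.card V : ℤ) = ∑ _v : V, (-1 : ℤ) := by simp
    _ ≤ ∑ v, f v := Finset.sum_le_sum fun v _ => by rcases hval v with h1 | h1 | h1 <;> omega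
  have hmem := Int.csInf_mem hne hbdd
  obtain ⟨f, hf, hsum⟩ := hmem
  have hkey := srdf_key G h f hf
  rw [hsum] at hkey
  rw [div_le_iff₀ (by norm_num : (0:ℚ) < 2)]
  have : ((3 * (Fintype.card V : ℤ) - 4 * (G.edgeFinset.card : ℤ) : ℤ) : ℚ)
      ≤ ((2 * gammaSR G : ℤ) : ℚ) := by exact_mod_cast hkey
  push_cast at this
  linarith
end

section
/- If G is a graph of order n with minimum degree δ and maximum degree Δ, then γ_SR(G) ≥ ((-2Δ² + 2Δδ + Δ + 2δ + 3)/((Δ+1)(2Δ+δ+3))) · n. -/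
open scoped Classical
open Finset SimpleGraph

lemma srdf_sum_bound {V : Type*} [Fintype V] (G : SimpleGraph V) (f : V → ℤ)
    (hf : IsSRDF G f) :
    ((-2 : ℤ) * G.maxDegree + 2 * G.minDegree + 3) * (Fintype.card V) ≤
      (2 * G.maxDegree + G.minDegree + 3) * ∑ v, f v := by
  obtain ⟨hvals, hclosed, -⟩ := hf
  have hswap : ∑ u, ∑ v ∈ Finset.univ.filter (G.Adj u), f v
      = ∑ v, (G.degree v : ℤ) * f v := by
    rw [Finset.sum_comm' (s' := fun v => Finset.univ.filter (fun u => G.Adj v u))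
      (t' := Finset.univ) (by intro x y; simp [G.adj_comm])]
    refine Finset.sum_congr rfl fun v _ => ?_
    rw [Finset.sum_const, SimpleGraph.degree, SimpleGraph.neighborFinset_eq_filter]
    simp [mul_comm]
  have h1 : (Fintype.card V : ℤ) ≤ ∑ v, ((G.degree v : ℤ) + 1) * f v := by
    have : (Fintype.card V : ℤ) ≤ ∑ u, (f u + ∑ v ∈ Finset.univ.filter (G.Adj u), f v) := by
      rw [← Finset.card_univ]
      calc ((Finset.univ : Finset V).card : ℤ) = ∑ _u : V, (1 : ℤ) := by simp
        _ ≤ _ := Finset.sum_le_sum fun u _ => hclosed u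
    calc (Fintype.card V : ℤ) ≤ _ := this
      _ = ∑ v, ((G.degree v : ℤ) + 1) * f v := by
          rw [Finset.sum_add_distrib, hswap]
          rw [← Finset.sum_add_distrib]
          refine Finset.sum_congr rfl fun v _ => by ring
  have key : ∀ v, ((-2 : ℤ) * G.maxDegree + 2 * G.minDegree + 3)
      ≤ (2 * G.maxDegree + G.minDegree + 3) * f v
        - 3 * (((G.degree v : ℤ) + 1) * f v - 1) := by
    intro v
    have hd1 : (G.minDegree : ℤ) ≤ G.degree v := by exact_mod_cast G.minDegree_le_degree v
    have hd2 : (G.degree v : ℤ) ≤ G.maxDegree := by exact_mod_cast G.degree_le_maxDegree v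
    rcases hvals v with h | h | h <;> rw [h] <;> nlinarith
  have h2 : ((-2 : ℤ) * G.maxDegree + 2 * G.minDegree + 3) * (Fintype.card V)
      ≤ ∑ v, ((2 * G.maxDegree + G.minDegree + 3) * f v
          - 3 * (((G.degree v : ℤ) + 1) * f v - 1)) := by
    calc ((-2 : ℤ) * G.maxDegree + 2 * G.minDegree + 3) * (Fintype.card V)
        = ∑ _v : V, ((-2 : ℤ) * G.maxDegree + 2 * G.minDegree + 3) := by
          rw [Finset.sum_const, Finset.card_univ, nsmul_eq_mul]; ring
      _ ≤ _ := Finset.sum_le_sum fun v _ => key v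
  have h3 : ∑ v, ((2 * G.maxDegree + G.minDegree + 3) * f v
          - 3 * (((G.degree v : ℤ) + 1) * f v - 1))
      = (2 * G.maxDegree + G.minDegree + 3) * (∑ v, f v)
        - 3 * (∑ v, ((G.degree v : ℤ) + 1) * f v) + 3 * (Fintype.card V) := by
    simp only [mul_sub, mul_one, Finset.sum_sub_distrib, ← Finset.mul_sum, Finset.sum_const,
      Finset.card_univ, nsmul_eq_mul]
    ring
  rw [h3] at h2
  linarith

theorem stmt2 {V : Type*} [Fintype V] (G : SimpleGraph V) :
    ((-2 * (G.maxDegree : ℚ) ^ 2 + 2 * G.maxDegree * G.minDegree + G.maxDegree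
        + 2 * G.minDegree + 3) /
      ((G.maxDegree + 1) * (2 * G.maxDegree + G.minDegree + 3))) * (Fintype.card V : ℚ)
      ≤ (gammaSR G : ℚ) := by
  have hden : (0:ℚ) < ((G.maxDegree : ℚ) + 1) * (2 * G.maxDegree + G.minDegree + 3) := by
    positivity
  have hne : Set.Nonempty {w : ℤ | ∃ f, IsSRDF G f ∧ ∑ v, f v = w} := by
    refine ⟨∑ _v : V, (1:ℤ), fun _ => 1,
      ⟨fun v => Or.inr (Or.inl rfl), fun u => ?_, fun u h => by simp at h⟩, rfl⟩
    have h0 : (0:ℤ) ≤ ∑ _v ∈ Finset.univ.filter (G.Adj u), (1:ℤ) :=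
      Finset.sum_nonneg fun _ _ => zero_le_one
    simpa using h0
  have hbdd : BddBelow {w : ℤ | ∃ f, IsSRDF G f ∧ ∑ v, f v = w} := by
    refine ⟨-(Fintype.card V : ℤ), ?_⟩
    rintro w ⟨f, ⟨hvals, -, -⟩, rfl⟩
    have h0 : ∑ _v : V, (-1:ℤ) ≤ ∑ v, f v :=
      Finset.sum_le_sum fun v _ => by rcases hvals v with h|h|h <;> omega
    simpa using h0
  obtain ⟨f, hf, hW⟩ := Int.csInf_mem hne hbdd
  have key := srdf_sum_bound G f hf
  rw [gammaSR, ← hW]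
  rw [div_mul_eq_mul_div, div_le_iff₀ hden]
  have key' : ((-2:ℚ) * G.maxDegree + 2 * G.minDegree + 3) * (Fintype.card V)
      ≤ (2 * (G.maxDegree:ℚ) + G.minDegree + 3) * ((∑ v, f v : ℤ) : ℚ) := by
    exact_mod_cast key
  have hmul := mul_le_mul_of_nonneg_left key'
    (show (0:ℚ) ≤ (G.maxDegree:ℚ) + 1 by positivity)
  nlinarith [hmul]
end

section
/- The signed Roman domination number of the complete graph K_n equals 1 for every n ≥ 1 with n ≠ 3, and γ_SR(K_3) = 2. -/
open scoped Classical
open Finset SimpleGraph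

lemma filter_adj_complete {n : ℕ} (u : Fin n) :
    Finset.univ.filter ((completeGraph (Fin n)).Adj u) = Finset.univ.erase u := by
  ext v
  simp [completeGraph, eq_comm]

lemma closed_sum {n : ℕ} (f : Fin n → ℤ) (u : Fin n) :
    f u + ∑ v ∈ Finset.univ.filter ((completeGraph (Fin n)).Adj u), f v = ∑ v, f v := by
  rw [filter_adj_complete, Finset.add_sum_erase _ f (Finset.mem_univ u)]

lemma srdf_weight_ge {n : ℕ} (hn : 1 ≤ n) (f : Fin n → ℤ)
    (hf : IsSRDF (completeGraph (Fin n)) f) : 1 ≤ ∑ v, f v := by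
  have h := hf.2.1 ⟨0, hn⟩
  rw [← closed_sum f ⟨0, hn⟩]; convert h

lemma srdf_of_top {n : ℕ} (f : Fin n → ℤ)
    (hval : ∀ v, f v = -1 ∨ f v = 1 ∨ f v = 2)
    (hsum : 1 ≤ ∑ v, f v)
    (hneg : ∀ u, f u = -1 → ∃ v, u ≠ v ∧ f v = 2) :
    IsSRDF (completeGraph (Fin n)) f := by
  refine ⟨hval, fun u => by rw [← closed_sum f u] at hsum; convert hsum, fun u hu => hneg u hu⟩

def gfun (i : ℕ) : ℤ := if i = 0 then 2 else if i % 2 = 1 then -1 else 1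
def hfun (i : ℕ) : ℤ := if i < 2 then 2 else if i < 5 then -1 else if i % 2 = 1 then 1 else -1

lemma sum_gfun : ∀ k, 1 ≤ k → ∑ i ∈ range (2*k), gfun i = 1 := by
  intro k hk
  induction k, hk using Nat.le_induction with
  | base => decide
  | succ k hk ih =>
    have h2 : 2 * (k+1) = (2*k) + 1 + 1 := by ring
    rw [h2, Finset.sum_range_succ, Finset.sum_range_succ, ih]
    have e1 : gfun (2*k) = 1 := by
      unfold gfun
      rw [if_neg (by omega), if_neg (by omega)]
    have e2 : gfun (2*k+1) = -1 := by
      unfold gfun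
      rw [if_neg (by omega), if_pos (by omega)]
    omega

lemma sum_hfun : ∀ k, 2 ≤ k → ∑ i ∈ range (2*k+1), hfun i = 1 := by
  intro k hk
  induction k, hk using Nat.le_induction with
  | base => decide
  | succ k hk ih =>
    have h2 : 2 * (k+1) + 1 = (2*k+1) + 1 + 1 := by ring
    rw [h2, Finset.sum_range_succ, Finset.sum_range_succ, ih]
    have e1 : hfun (2*k+1) = 1 := by
      unfold hfun
      rw [if_neg (by omega), if_neg (by omega), if_pos (by omega)]
    have e2 : hfun (2*k+2) = -1 := by
      unfold hfun
      rw [if_neg (by omega), if_neg (by omega), if_neg (by omega)]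
    omega

lemma one_mem {n : ℕ} (hn : 1 ≤ n) (hn3 : n ≠ 3) :
    (1 : ℤ) ∈ {w | ∃ f, IsSRDF (completeGraph (Fin n)) f ∧ ∑ v, f v = w} := by
  obtain rfl | hn2 : n = 1 ∨ 2 ≤ n := by omega
  · refine ⟨fun _ => 1, srdf_of_top _ (fun v => by norm_num) (by simp) ?_, by simp⟩
    intro u hu; norm_num at hu
  rcases Nat.even_or_odd n with ⟨k, hk⟩ | ⟨k, hk⟩
  · -- even
    have hk' : n = 2 * k := by omega
    have hk1 : 1 ≤ k := by omega
    subst hk'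
    have hsum : ∑ v : Fin (2*k), gfun v.val = 1 := by
      rw [Fin.sum_univ_eq_sum_range (fun i => gfun i) (2*k)]
      exact sum_gfun k hk1
    refine ⟨fun i => gfun i.val, srdf_of_top _ ?_ (le_of_eq hsum.symm) ?_, hsum⟩
    · intro v; unfold gfun; split_ifs <;> norm_num
    · intro u hu
      have hu0 : u.val ≠ 0 := by
        intro h; rw [show gfun u.val = gfun 0 from by rw [h]] at hu
        norm_num [gfun] at hu
      refine ⟨⟨0, by omega⟩, ?_, by norm_num [gfun]⟩
      simp [Fin.ext_iff]
      omega
  · -- odd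
    have hk2 : 2 ≤ k := by omega
    subst hk
    have hsum : ∑ v : Fin (2*k+1), hfun v.val = 1 := by
      rw [Fin.sum_univ_eq_sum_range (fun i => hfun i) (2*k+1)]
      exact sum_hfun k hk2
    refine ⟨fun i => hfun i.val, srdf_of_top _ ?_ (le_of_eq hsum.symm) ?_, hsum⟩
    · intro v; unfold hfun; split_ifs <;> norm_num
    · intro u hu
      have hu0 : u.val ≠ 0 := by
        intro h; rw [show hfun u.val = hfun 0 from by rw [h]] at hu
        norm_num [hfun] at hu
      refine ⟨⟨0, by omega⟩, ?_, by norm_num [hfun]⟩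
      rw [Ne, Fin.ext_iff]; show ¬ u.val = 0
      omega

lemma srdf_bdd (n : ℕ) (hn : 1 ≤ n) :
    BddBelow {w | ∃ f, IsSRDF (completeGraph (Fin n)) f ∧ ∑ v, f v = w} := by
  refine ⟨1, ?_⟩
  rintro w ⟨f, hf, rfl⟩
  exact srdf_weight_ge hn f hf

theorem stmt3 :
    (∀ n : ℕ, 1 ≤ n → n ≠ 3 → gammaSR (completeGraph (Fin n)) = 1) ∧
      gammaSR (completeGraph (Fin 3)) = 2 := by
  constructor
  · intro n hn hn3
    have hmem := one_mem hn hn3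
    refine le_antisymm (csInf_le (srdf_bdd n hn) hmem) (le_csInf ⟨1, hmem⟩ ?_)
    rintro w ⟨f, hf, rfl⟩
    exact srdf_weight_ge hn f hf
  · have hmem : (2 : ℤ) ∈ {w | ∃ f, IsSRDF (completeGraph (Fin 3)) f ∧ ∑ v, f v = w} := by
      refine ⟨![2, -1, 1], srdf_of_top _ (by decide) (by decide) (by decide), by decide⟩
    refine le_antisymm (csInf_le (srdf_bdd 3 (by norm_num)) hmem) (le_csInf ⟨2, hmem⟩ ?_)
    rintro w ⟨f, hf, rfl⟩
    have hge := srdf_weight_ge (by norm_num) f hf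
    obtain ⟨hval, hnb, hneg⟩ := hf
    have hs : ∑ v, f v = f 0 + f 1 + f 2 := by rw [Fin.sum_univ_three]
    by_contra hc
    push_neg at hc
    have hsum1 : f 0 + f 1 + f 2 = 1 := by omega
    rcases hval 0 with h0|h0|h0 <;> rcases hval 1 with h1|h1|h1 <;> rcases hval 2 with h2|h2|h2
    all_goals try omega
    · obtain ⟨v, hadj, hv⟩ := hneg 0 h0; fin_cases v <;> simp_all
    · obtain ⟨v, hadj, hv⟩ := hneg 1 h1; fin_cases v <;> simp_all
    · obtain ⟨v, hadj, hv⟩ := hneg 2 h2; fin_cases v <;> simp_all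
end

section
/- The signed Roman domination number of the cycle C_n on n ≥ 3 vertices equals ⌈2n/3⌉. -/
open scoped Classical
open Finset SimpleGraph

/-- helper value pattern -/
def Fpat (n i : ℕ) : ℤ :=
  if i % 3 = 0 ∧ i + 3 ≤ n then 2 else if i % 3 = 1 ∧ i + 2 ≤ n then -1 else 1

lemma Fpat_values (n i : ℕ) : Fpat n i = -1 ∨ Fpat n i = 1 ∨ Fpat n i = 2 := by
  unfold Fpat; split_ifs <;> simp

lemma Fpat_key (n a b c : ℕ) (hn : 3 ≤ n) (hb : b < n)
    (ha : a = if b = 0 then n - 1 else b - 1)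
    (hc : c = if b + 1 = n then 0 else b + 1) :
    1 ≤ Fpat n a + Fpat n b + Fpat n c := by
  subst ha hc; unfold Fpat; split_ifs <;> omega

lemma Fpat_roman (n b : ℕ) (hn : 3 ≤ n) (hb : b < n) (h : Fpat n b = -1) :
    1 ≤ b ∧ Fpat n (b - 1) = 2 := by
  unfold Fpat at h ⊢; split_ifs at h ⊢ <;> omega

lemma Fpat_shift (k i : ℕ) : Fpat (3 + (k + 3)) (3 + i) = Fpat (k + 3) i := by
  unfold Fpat
  have : (3 + i) % 3 = i % 3 := by omega
  rw [this]
  split_ifs <;> omega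

lemma Fpat_sum (k : ℕ) :
    ∑ i ∈ Finset.range (k + 3), Fpat (k + 3) i = (k + 3 : ℤ) - ((k + 3) / 3 : ℕ) := by
  induction k using Nat.strong_induction_on with
  | _ k ih =>
    match k, ih with
    | 0, _ => decide
    | 1, _ => decide
    | 2, _ => decide
    | (k + 3), ih =>
      have h := ih k (by omega)
      have : k + 3 + 3 = 3 + (k + 3) := by omega
      rw [this, Finset.sum_range_add]
      simp only [Fpat_shift]
      rw [h]
      have h1 : ∑ i ∈ Finset.range 3, Fpat (3 + (k + 3)) i = 2 := by
        rw [show (3:ℕ) = 2 + 1 by rfl, Finset.sum_range_succ,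
          show (2:ℕ) = 1 + 1 by rfl, Finset.sum_range_succ, Finset.sum_range_one]
        unfold Fpat
        norm_num
      rw [h1]
      have h2 : (3 + (k + 3)) / 3 = (k + 3) / 3 + 1 := by omega
      rw [h2]
      push_cast
      ring


open Fin.CommRing in
lemma cyc_adj (m : ℕ) (u v : Fin (m+3)) :
    (SimpleGraph.cycleGraph (m+3)).Adj u v ↔ v = u - 1 ∨ v = u + 1 := by
  rw [show m + 3 = (m+1)+2 by omega] at *
  rw [SimpleGraph.cycleGraph_adj]
  constructor
  · rintro (h | h)
    · left; linear_combination -h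
    · right; linear_combination h
  · rintro (rfl | rfl)
    · left; ring
    · right; ring

lemma two_ne (m : ℕ) : (2 : Fin (m+3)) ≠ 0 := by simp [Fin.ext_iff]; rw [Nat.mod_eq_of_lt (by omega)]; omega

open Fin.CommRing in
lemma sub_ne_add (m : ℕ) (u : Fin (m+3)) : u - 1 ≠ u + 1 := by
  intro h; exact two_ne m (by linear_combination -h)

open Fin.CommRing in
lemma sub_ne_self (m : ℕ) (u : Fin (m+3)) : u - 1 ≠ u := by
  intro h
  exact one_ne_zero (α := Fin (m+3)) (by linear_combination -h)

open Fin.CommRing in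
lemma self_ne_add (m : ℕ) (u : Fin (m+3)) : u ≠ u + 1 := by
  intro h
  exact one_ne_zero (α := Fin (m+3)) (by linear_combination -h)

lemma nbr_sum (m : ℕ) (f : Fin (m+3) → ℤ) (u : Fin (m+3))
    [inst : DecidablePred ((SimpleGraph.cycleGraph (m+3)).Adj u)] :
    ∑ v ∈ Finset.univ.filter ((SimpleGraph.cycleGraph (m+3)).Adj u), f v
      = f (u - 1) + f (u + 1) := by
  have : Finset.univ.filter ((SimpleGraph.cycleGraph (m+3)).Adj u) = {u - 1, u + 1} := by
    ext v; simp [cyc_adj]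
  rw [this, Finset.sum_pair (sub_ne_add m u)]

open Fin.CommRing in
lemma lower_bound (m : ℕ) (f : Fin (m+3) → ℤ)
    (hf : IsSRDF (SimpleGraph.cycleGraph (m+3)) f) :
    2 * ((m : ℤ) + 3) ≤ 3 * ∑ v, f v := by
  obtain ⟨hval, hsum, hrom⟩ := hf
  have hs : ∀ u, 1 ≤ f (u - 1) + f u + f (u + 1) := by
    intro u
    have h := hsum u
    rw [nbr_sum] at h
    linarith
  have keyA : ∀ v : Fin (m+3), f v = -1 → f (v + 1) ≠ -1 := by
    intro v hv h1
    have h := hs v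
    rcases hval (v - 1) with h2 | h2 | h2 <;> omega
  have keyB : ∀ v : Fin (m+3), f v = -1 → f (v + 2) ≠ -1 := by
    intro v hv h1
    have h := hs (v + 1)
    rw [add_sub_cancel_right, show v + 1 + 1 = v + 2 from by ring] at h
    rcases hval (v + 1) with h2 | h2 | h2 <;> omega
  have hsep : ∀ v v' : Fin (m+3), f v = -1 → f v' = -1 →
      (v' = v + 1 ∨ v' = v - 1 ∨ v' = v + 2 ∨ v' = v - 2) → False := by
    rintro v v' hv hv' (rfl | rfl | rfl | rfl)
    · exact keyA v hv hv'
    · exact keyA (v - 1) hv' (by rwa [sub_add_cancel])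
    · exact keyB v hv hv'
    · exact keyB (v - 2) hv' (by rwa [show v - 2 + 2 = v from by ring])
  have keyC : ∀ v, f v = -1 → 2 ≤ f (v - 1) + f v + f (v + 1) := by
    intro v hv
    obtain ⟨w, hw, hw2⟩ := hrom v hv
    have h := hs v
    rcases (cyc_adj m v w).1 hw with rfl | rfl
    · rcases hval (v + 1) with h1 | h1 | h1 <;> omega
    · rcases hval (v - 1) with h1 | h1 | h1 <;> omega
  classical
  set A : Finset (Fin (m+3)) := Finset.univ.filter (fun v => f v = -1) with hA
  set t : Fin (m+3) → Finset (Fin (m+3)) := fun v => {v - 1, v, v + 1} with ht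
  have htcard : ∀ v, (t v).card = 3 := by
    intro v
    rw [show t v = insert (v-1) {v, v+1} from rfl,
      Finset.card_insert_of_notMem (by simp [sub_ne_self m v, sub_ne_add m v]),
      Finset.card_pair (self_ne_add m v)]
  have hdisjpair : ∀ v ∈ A, ∀ v' ∈ A, v ≠ v' → Disjoint (t v) (t v') := by
    intro v hv v' hv' hvv'
    have hfv : f v = -1 := (Finset.mem_filter.1 hv).2
    have hfv' : f v' = -1 := (Finset.mem_filter.1 hv').2
    rw [Finset.disjoint_left]
    intro x hx hx'
    simp only [ht, Finset.mem_insert, Finset.mem_singleton] at hx hx'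
    rcases hx with h1 | h1 | h1 <;> rcases hx' with h2 | h2 | h2
    · exact hvv' (by first | linear_combination h1 - h2 | linear_combination h2 - h1)
    · exact hsep v v' hfv hfv' (Or.inr (Or.inl (by first | linear_combination h1 - h2 | linear_combination h2 - h1)))
    · exact hsep v v' hfv hfv' (Or.inr (Or.inr (Or.inr (by first | linear_combination h1 - h2 | linear_combination h2 - h1))))
    · exact hsep v v' hfv hfv' (Or.inl (by first | linear_combination h1 - h2 | linear_combination h2 - h1))
    · exact hvv' (by first | linear_combination h1 - h2 | linear_combination h2 - h1)
    · exact hsep v v' hfv hfv' (Or.inr (Or.inl (by first | linear_combination h1 - h2 | linear_combination h2 - h1)))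
    · exact hsep v v' hfv hfv' (Or.inr (Or.inr (Or.inl (by first | linear_combination h1 - h2 | linear_combination h2 - h1))))
    · exact hsep v v' hfv hfv' (Or.inl (by first | linear_combination h1 - h2 | linear_combination h2 - h1))
    · exact hvv' (by first | linear_combination h1 - h2 | linear_combination h2 - h1)
  set T : Finset (Fin (m+3)) := A.biUnion t with hT
  have hsumT : ∑ x ∈ T, f x = ∑ v ∈ A, ∑ x ∈ t v, f x :=
    Finset.sum_biUnion (fun v hv v' hv' hne =>
      hdisjpair v (Finset.mem_coe.1 hv) v' (Finset.mem_coe.1 hv') hne)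
  have hTcard : T.card = 3 * A.card := by
    rw [hT, Finset.card_biUnion hdisjpair]
    simp [htcard, Finset.sum_const, mul_comm]
  have htriple : ∀ v ∈ A, (2 : ℤ) ≤ ∑ x ∈ t v, f x := by
    intro v hv
    have hfv : f v = -1 := (Finset.mem_filter.1 hv).2
    have hexp : ∑ x ∈ t v, f x = f (v - 1) + (f v + f (v + 1)) := by
      rw [show t v = insert (v-1) {v, v+1} from rfl,
        Finset.sum_insert (by simp [sub_ne_self m v, sub_ne_add m v]),
        Finset.sum_pair (self_ne_add m v)]
    rw [hexp]
    have := keyC v hfv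
    linarith
  have hT2 : 2 * (A.card : ℤ) ≤ ∑ x ∈ T, f x := by
    rw [hsumT]
    calc 2 * (A.card : ℤ) = ∑ _v ∈ A, (2 : ℤ) := by
          rw [Finset.sum_const, nsmul_eq_mul]; ring
      _ ≤ _ := Finset.sum_le_sum htriple
  have hrest : ∀ x ∈ Finset.univ \ T, (1 : ℤ) ≤ f x := by
    intro x hx
    have hxT : x ∉ T := (Finset.mem_sdiff.1 hx).2
    rcases hval x with h | h | h
    · exfalso
      exact hxT (Finset.mem_biUnion.2 ⟨x, Finset.mem_filter.2 ⟨Finset.mem_univ x, h⟩,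
        by simp [ht]⟩)
    · rw [h]
    · rw [h]; norm_num
  have hR : (((Finset.univ \ T).card : ℤ)) ≤ ∑ x ∈ Finset.univ \ T, f x := by
    have := Finset.card_nsmul_le_sum (Finset.univ \ T) f 1 hrest
    simpa using this
  have hsplit : ∑ x ∈ Finset.univ \ T, f x + ∑ x ∈ T, f x = ∑ x, f x :=
    Finset.sum_sdiff (Finset.subset_univ T)
  have hle : T.card ≤ m + 3 := by
    have := Finset.card_le_univ T
    simpa using this
  have hcast : (((Finset.univ \ T).card : ℤ)) = (m + 3 : ℤ) - 3 * (A.card : ℤ) := by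
    rw [Finset.card_sdiff_of_subset (Finset.subset_univ T), Finset.card_univ, Fintype.card_fin, hTcard]
    rw [hTcard] at hle
    omega
  have h3a : 3 * (A.card : ℤ) ≤ (m : ℤ) + 3 := by
    rw [hTcard] at hle
    exact_mod_cast hle
  linarith

lemma coe_sub_one' (m : ℕ) (u : Fin (m+3)) :
    ((u - 1 : Fin (m+3)) : ℕ) = if (u : ℕ) = 0 then m + 3 - 1 else (u : ℕ) - 1 := by
  rw [Fin.coe_sub_one]
  simp only [Fin.ext_iff, Fin.val_zero]
  split_ifs <;> omega

lemma coe_add_one' (m : ℕ) (u : Fin (m+3)) :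
    ((u + 1 : Fin (m+3)) : ℕ) = if (u : ℕ) + 1 = m + 3 then 0 else (u : ℕ) + 1 := by
  rw [Fin.val_add_one]
  rcases Nat.lt_or_ge (u.val+1) (m+3) with h | h
  · rw [if_neg, if_neg] <;> simp [Fin.ext_iff, Fin.last] <;> omega
  · have := u.isLt; rw [if_pos, if_pos] <;> simp [Fin.ext_iff, Fin.last] <;> omega

lemma f0_SRDF (m : ℕ) :
    IsSRDF (SimpleGraph.cycleGraph (m+3)) (fun i : Fin (m+3) => Fpat (m+3) i.val) := by
  refine ⟨fun v => Fpat_values _ _, ?_, ?_⟩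
  · intro u
    rw [nbr_sum]
    dsimp only
    have hk := Fpat_key (m+3) ((u - 1 : Fin (m+3)) : ℕ) (u : ℕ) ((u + 1 : Fin (m+3)) : ℕ)
      (by omega) u.isLt (coe_sub_one' m u) (coe_add_one' m u)
    linarith
  · intro u hu
    dsimp only at hu
    obtain ⟨h1, h2⟩ := Fpat_roman (m+3) u.val (by omega) u.isLt hu
    refine ⟨u - 1, (cyc_adj m u (u - 1)).2 (Or.inl rfl), ?_⟩
    show Fpat (m+3) ((u - 1 : Fin (m+3)) : ℕ) = 2
    rw [coe_sub_one', if_neg (by omega)]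
    exact h2

lemma f0_sum (m : ℕ) :
    ∑ v : Fin (m+3), Fpat (m+3) v.val = ((m : ℤ) + 3) - (((m+3)/3 : ℕ) : ℤ) := by
  rw [Fin.sum_univ_eq_sum_range (fun i => Fpat (m+3) i) (m+3), Fpat_sum m]

lemma ceil_eq (n : ℕ) : ⌈(2 * (n : ℚ)) / 3⌉ = (n : ℤ) - ((n / 3 : ℕ) : ℤ) := by
  have h3 : (0:ℚ) < 3 := by norm_num
  apply le_antisymm
  · rw [Int.ceil_le, div_le_iff₀ h3]
    exact_mod_cast (by omega : (2 * (n:ℤ)) ≤ ((n : ℤ) - ((n / 3 : ℕ) : ℤ)) * 3)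
  · rw [Int.le_ceil_iff, lt_div_iff₀ h3]
    push_cast
    have h : ((n:ℤ) - ((n/3 : ℕ) : ℤ) - 1) * 3 < 2 * (n : ℤ) := by omega
    exact_mod_cast h


theorem stmt4 (n : ℕ) (hn : 3 ≤ n) :
    gammaSR (SimpleGraph.cycleGraph n) = ⌈(2 * (n : ℚ)) / 3⌉ := by
  obtain ⟨m, rfl⟩ : ∃ m, n = m + 3 := ⟨n - 3, by omega⟩
  have hceil := ceil_eq (m+3)
  have hmem : (⌈(2 * ((m+3 : ℕ) : ℚ)) / 3⌉ : ℤ) ∈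
      {w | ∃ f, IsSRDF (SimpleGraph.cycleGraph (m+3)) f ∧ ∑ v, f v = w} := by
    refine ⟨_, f0_SRDF m, ?_⟩
    rw [f0_sum m, hceil]
    push_cast
    ring
  have hlb : ∀ w ∈ {w | ∃ f, IsSRDF (SimpleGraph.cycleGraph (m+3)) f ∧ ∑ v, f v = w},
      (⌈(2 * ((m+3 : ℕ) : ℚ)) / 3⌉ : ℤ) ≤ w := by
    rintro w ⟨f, hf, rfl⟩
    rw [Int.ceil_le, div_le_iff₀ (by norm_num : (0:ℚ) < 3)]
    have h := lower_bound m f hf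
    have h' : 2 * ((m : ℤ) + 3) ≤ (∑ v, f v) * 3 := by linarith
    exact_mod_cast h'
  unfold gammaSR
  exact le_antisymm (csInf_le ⟨_, hlb⟩ hmem) (le_csInf ⟨_, hmem⟩ hlb)
end

section
/- A graph G of order n satisfies γ_SR(G) = n if and only if G is the empty graph (the graph with no edges) on n vertices. -/
open scoped Classical
open Finset SimpleGraph

lemma ones_srdf {V : Type*} [Fintype V] (G : SimpleGraph V) :
    IsSRDF G (fun _ => 1) := by
  refine ⟨fun v => Or.inr (Or.inl rfl), fun u => ?_, fun u h => by simp at h⟩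
  simp only [Finset.sum_const, nsmul_eq_mul, mul_one]
  omega

lemma bdd {V : Type*} [Fintype V] (G : SimpleGraph V) :
    BddBelow {w | ∃ f, IsSRDF G f ∧ ∑ v, f v = w} := by
  refine ⟨-(Fintype.card V : ℤ), fun w hw => ?_⟩
  obtain ⟨f, ⟨hf1, _, _⟩, rfl⟩ := hw
  calc -(Fintype.card V : ℤ) = ∑ _v : V, (-1 : ℤ) := by simp
    _ ≤ ∑ v, f v := Finset.sum_le_sum fun v _ => by rcases hf1 v with h|h|h <;> omega

theorem stmt6 {V : Type*} [Fintype V] (G : SimpleGraph V) :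
    gammaSR G = (Fintype.card V : ℤ) ↔ G = ⊥ := by
  constructor
  · intro h
    by_contra hne
    obtain ⟨b, a, hab⟩ : ∃ a b, G.Adj a b := by
      by_contra hno
      push_neg at hno
      exact hne (by ext x y; simp [hno x y])
    set d : V → ℕ := fun v => (Finset.univ.filter (G.Adj v)).card with hd
    have hbpos : 0 < d b := Finset.card_pos.2 ⟨a, by simp [hab]⟩
    obtain ⟨b', hb'mem, hb'min⟩ := Finset.exists_min_image
      (Finset.univ.filter fun v => 0 < d v) d ⟨b, by simp [hbpos]⟩
    have hb'pos : 0 < d b' := by simpa using hb'mem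
    obtain ⟨a', ha'⟩ : ∃ a', G.Adj b' a' := by
      obtain ⟨x, hx⟩ := Finset.card_pos.1 hb'pos
      exact ⟨x, (Finset.mem_filter.1 hx).2⟩
    have hne' : a' ≠ b' := fun h => G.irrefl (h ▸ ha')
    have hba : ¬ b' = a' := fun h => hne' h.symm
    set f : V → ℤ := fun v => 1 + (if v = a' then 1 else 0) - (if v = b' then 2 else 0) with hf
    have hsum : ∀ u : V, ∑ v ∈ Finset.univ.filter (G.Adj u), f v =
        (d u : ℤ) + (if G.Adj u a' then 1 else 0) - (if G.Adj u b' then 2 else 0) := by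
      intro u
      simp only [hf, Finset.sum_sub_distrib, Finset.sum_add_distrib, Finset.sum_const,
        Finset.sum_ite_eq', Finset.mem_filter, Finset.mem_univ, true_and]
      simp [hd]
    have hmin : ∀ u, 0 < d u → d b' ≤ d u := fun u hu => hb'min u (by simp [hu])
    have hsrdf : IsSRDF G f := by
      refine ⟨fun v => ?_, fun u => ?_, fun u hu => ?_⟩
      · rcases eq_or_ne v b' with h1|h1
        · left; simp [hf, h1, hba]
        · rcases eq_or_ne v a' with h2|h2
          · right; right; simp [hf, h2, hne']
          · right; left; simp [hf, h1, h2]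
      · rw [hsum u]
        by_cases hub : u = b'
        · have hfu : f u = -1 := by simp [hf, hub, hba]
          have hAa : G.Adj u a' := by rw [hub]; exact ha'
          have hAb : ¬ G.Adj u b' := by rw [hub]; exact G.irrefl
          have hdd : d u = d b' := by rw [hub]
          rw [hfu, if_pos hAa, if_neg hAb]
          omega
        by_cases hua : u = a'
        · have hfu : f u = 2 := by simp [hf, hua, hne']
          have hAb : G.Adj u b' := by rw [hua]; exact G.adj_symm ha'
          have hAa : ¬ G.Adj u a' := by rw [hua]; exact G.irrefl
          have hdu : 0 < d u := Finset.card_pos.2 ⟨b', by simp [hAb]⟩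
          rw [hfu, if_pos hAb, if_neg hAa]
          omega
        · have hfu : f u = 1 := by simp [hf, hua, hub]
          rw [hfu]
          by_cases hb : G.Adj u b'
          · have hdu : 0 < d u := Finset.card_pos.2 ⟨b', by simp [hb]⟩
            have hle : d b' ≤ d u := hmin u hdu
            have hb2 : 2 ≤ d b' := by
              by_contra hlt
              have h1 : d b' ≤ 1 := by omega
              have hmemu : u ∈ Finset.univ.filter (G.Adj b') := by simp [G.adj_symm hb]
              have hmema : a' ∈ Finset.univ.filter (G.Adj b') := by simp [ha']
              exact hua (Finset.card_le_one.1 h1 u hmemu a' hmema)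
            rw [if_pos hb]
            split_ifs <;> omega
          · rw [if_neg hb]
            split_ifs <;> omega
      · have hub : u = b' := by
          by_contra hneq
          simp only [hf] at hu
          split_ifs at hu <;> omega
        refine ⟨a', by rw [hub]; exact ha', ?_⟩
        simp [hf, hne']
    have hw : ∑ v, f v = (Fintype.card V : ℤ) - 1 := by
      simp only [hf, Finset.sum_sub_distrib, Finset.sum_add_distrib, Finset.sum_const,
        Finset.sum_ite_eq', Finset.mem_univ, if_true]
      simp only [Finset.card_univ, nsmul_eq_mul, mul_one]
      omega
    have hle : gammaSR G ≤ (Fintype.card V : ℤ) - 1 :=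
      csInf_le (bdd G) ⟨f, hsrdf, hw⟩
    omega
  · intro h
    subst h
    have hmem : (Fintype.card V : ℤ) ∈ {w | ∃ f, IsSRDF (⊥ : SimpleGraph V) f ∧ ∑ v, f v = w} :=
      ⟨fun _ => 1, ones_srdf ⊥, by simp⟩
    refine le_antisymm (csInf_le (bdd ⊥) hmem) (le_csInf ⟨_, hmem⟩ ?_)
    rintro w ⟨f, ⟨hf1, hf2, _⟩, rfl⟩
    have hone : ∀ v, 1 ≤ f v := by
      intro v
      refine le_trans (hf2 v) (le_of_eq ?_)
      rw [add_eq_left]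
      exact Finset.sum_eq_zero fun x hx => by simp at hx
    calc (Fintype.card V : ℤ) = ∑ _v : V, (1 : ℤ) := by simp
      _ ≤ ∑ v, f v := Finset.sum_le_sum fun v _ => hone v
end

section
/- For the ladder graph LG_n = P_2 □ P_n with n ≥ 2, there exists a signed Roman dominating function f with |V_{-1}| = n - 1, |V_2| = ⌊n/2⌋, and |V_1| = ⌊n/2⌋ + 1 if n is even and ⌊n/2⌋ + 2 if n is odd; hence γ_SR(LG_n) ≤ ⌊(n+2)/2⌋ + 1. -/
open scoped Classical
open Finset SimpleGraph

/-! ### Auxiliary material -/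

lemma ladder_adj' (n : ℕ) (u v : Fin 2 × Fin n) :
    (ladderGraph n).Adj u v ↔
      (((u.1:ℕ) + 1 = v.1 ∨ (v.1:ℕ) + 1 = u.1) ∧ u.2 = v.2) ∨
      (((u.2:ℕ) + 1 = v.2 ∨ (v.2:ℕ) + 1 = u.2) ∧ u.1 = v.1) := by
  simp [ladderGraph, boxProd_adj, pathGraph_adj]

lemma cross_sum (n : ℕ) (F : ℕ → ℕ → ℤ) (c d : Fin 2) (hcd : c ≠ d) (j : Fin n) :
    ∑ b : Fin n, (if (ladderGraph n).Adj (c, j) (d, b) then F d b else 0) = F d j := by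
  have hv : (c:ℕ) ≠ (d:ℕ) := fun h => hcd (Fin.ext h)
  have hc := c.isLt
  have hd := d.isLt
  have key : ∀ b : Fin n, ((ladderGraph n).Adj (c, j) (d, b)) ↔ j = b := by
    intro b
    rw [ladder_adj']
    constructor
    · rintro (⟨-, h⟩ | ⟨-, h⟩)
      · exact h
      · exact absurd h hcd
    · intro h
      refine Or.inl ⟨?_, h⟩
      simp only at hc hd ⊢
      omega
  simp only [key]
  rw [Finset.sum_ite_eq]
  simp

lemma row_sum (n : ℕ) (F : ℕ → ℕ → ℤ) (c : Fin 2) (j : Fin n) :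
    ∑ b : Fin n, (if (ladderGraph n).Adj (c, j) (c, b) then F c b else 0)
      = (if 1 ≤ (j:ℕ) then F c ((j:ℕ)-1) else 0) + (if (j:ℕ)+1 < n then F c ((j:ℕ)+1) else 0) := by
  have key : ∀ b : Fin n, (if (ladderGraph n).Adj (c, j) (c, b) then F c b else 0)
      = (fun k => (if k+1 = (j:ℕ) then F c k else 0) + (if (j:ℕ)+1 = k then F c k else 0)) (b:ℕ) := by
    intro b
    have : ((ladderGraph n).Adj (c, j) (c, b)) ↔ ((j:ℕ)+1 = (b:ℕ) ∨ (b:ℕ)+1 = (j:ℕ)) := by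
      rw [ladder_adj']
      dsimp only
      constructor
      · rintro (⟨h, -⟩ | ⟨h, -⟩)
        · omega
        · exact h
      · intro h; exact Or.inr ⟨h, rfl⟩
    rw [if_congr this rfl rfl]
    simp only
    split_ifs <;> first | (exfalso; omega) | ring
  rw [Finset.sum_congr rfl (fun b _ => key b),
    Fin.sum_univ_eq_sum_range
      (fun k => (if k+1 = (j:ℕ) then F c k else 0) + (if (j:ℕ)+1 = k then F c k else 0)) n,
    Finset.sum_add_distrib]
  congr 1
  · rcases Nat.eq_zero_or_pos (j:ℕ) with h0 | h0
    · rw [Finset.sum_eq_zero, if_neg (by omega)]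
      intro k hk; rw [if_neg (by omega)]
    · have hcg : ∀ k ∈ Finset.range n, (if k+1 = (j:ℕ) then F c k else 0)
          = (if (j:ℕ)-1 = k then F c k else 0) := by
        intro k hk; exact if_congr (by omega) rfl rfl
      rw [Finset.sum_congr rfl hcg, Finset.sum_ite_eq,
        if_pos (Finset.mem_range.2 (show (j:ℕ) - 1 < n by have := j.isLt; omega)),
        if_pos (show 1 ≤ (j:ℕ) by omega)]
  · rw [Finset.sum_ite_eq]
    simp [Finset.mem_range]

lemma fin_two_cases (i : Fin 2) : i = 0 ∨ i = 1 := by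
  rcases i with ⟨iv, h⟩
  interval_cases iv
  · exact Or.inl rfl
  · exact Or.inr rfl

lemma ladder_nbr_sum (n : ℕ) (F : ℕ → ℕ → ℤ) (i : Fin 2) (j : Fin n) :
    ∑ v ∈ Finset.univ.filter ((ladderGraph n).Adj (i, j)), F v.1 v.2
      = F (1 - (i:ℕ)) j + ((if 1 ≤ (j:ℕ) then F i ((j:ℕ)-1) else 0)
        + (if (j:ℕ)+1 < n then F i ((j:ℕ)+1) else 0)) := by
  rw [Finset.sum_filter, Fintype.sum_prod_type, Fin.sum_univ_two]
  dsimp only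
  rcases fin_two_cases i with h | h <;> subst h
  · rw [row_sum n F 0 j, cross_sum n F 0 1 (by decide) j]
    norm_num
    try ring
  · rw [row_sum n F 1 j, cross_sum n F 1 0 (by decide) j]
    norm_num
    try ring

/-- value pattern on the ladder: row `i`, column `j`. -/
def srg (n i j : ℕ) : ℤ :=
  if j % 2 = 1 then (if (j % 4 = 1 ∧ i = 0) ∨ (j % 4 = 3 ∧ i = 1) then 2 else 1)
  else if (i = 1 ∧ j = 0) ∨
      (n % 2 = 1 ∧ j = n - 1 ∧ ((n % 4 = 1 ∧ i = 0) ∨ (n % 4 = 3 ∧ i = 1))) then 1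
  else -1

lemma srg_values (n i j : ℕ) : srg n i j = -1 ∨ srg n i j = 1 ∨ srg n i j = 2 := by
  unfold srg; split_ifs <;> norm_num

lemma srg_ge (n i j : ℕ) : -1 ≤ srg n i j := by
  rcases srg_values n i j with h | h | h <;> rw [h] <;> norm_num

lemma srg_01 (n j : ℕ) (h : j % 4 = 1) : srg n 0 j = 2 := by
  unfold srg; rw [if_pos (by omega), if_pos (by omega)]

lemma srg_11 (n j : ℕ) (h : j % 4 = 1) : srg n 1 j = 1 := by
  unfold srg; rw [if_pos (by omega), if_neg (by omega)]

lemma srg_03 (n j : ℕ) (h : j % 4 = 3) : srg n 0 j = 1 := by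
  unfold srg; rw [if_pos (by omega), if_neg (by omega)]

lemma srg_13 (n j : ℕ) (h : j % 4 = 3) : srg n 1 j = 2 := by
  unfold srg; rw [if_pos (by omega), if_pos (by omega)]

lemma srg_odd_sum (n j : ℕ) (h : j % 2 = 1) : srg n 0 j + srg n 1 j = 3 := by
  rcases (by omega : j % 4 = 1 ∨ j % 4 = 3) with h4 | h4
  · rw [srg_01 n j h4, srg_11 n j h4]; norm_num
  · rw [srg_03 n j h4, srg_13 n j h4]; norm_num

lemma srg_odd_ge (n i j : ℕ) (h : j % 2 = 1) (hi : i < 2) : 1 ≤ srg n i j := by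
  rcases (by omega : j % 4 = 1 ∨ j % 4 = 3) with h4 | h4 <;> interval_cases i
  · rw [srg_01 n j h4]; norm_num
  · rw [srg_11 n j h4]
  · rw [srg_03 n j h4]
  · rw [srg_13 n j h4]; norm_num

lemma srg_zero0 (n : ℕ) (hn : 2 ≤ n) : srg n 0 0 = -1 := by
  unfold srg; rw [if_neg (by omega), if_neg (by omega)]

lemma srg_zero1 (n : ℕ) : srg n 1 0 = 1 := by
  unfold srg; rw [if_neg (by omega), if_pos (by omega)]

lemma srg_last1 (n : ℕ) (hn : 2 ≤ n) (h : n % 4 = 1) :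
    srg n 0 (n-1) = 1 ∧ srg n 1 (n-1) = -1 := by
  constructor
  · unfold srg; rw [if_neg (by omega), if_pos (by omega)]
  · unfold srg; rw [if_neg (by omega), if_neg (by omega)]

lemma srg_last3 (n : ℕ) (hn : 2 ≤ n) (h : n % 4 = 3) :
    srg n 0 (n-1) = -1 ∧ srg n 1 (n-1) = 1 := by
  constructor
  · unfold srg; rw [if_neg (by omega), if_neg (by omega)]
  · unfold srg; rw [if_neg (by omega), if_pos (by omega)]

lemma srg_last_sum (n : ℕ) (hn : 2 ≤ n) (ho : n % 2 = 1) :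
    srg n 0 (n-1) + srg n 1 (n-1) = 0 := by
  rcases (by omega : n % 4 = 1 ∨ n % 4 = 3) with h | h
  · obtain ⟨e0, e1⟩ := srg_last1 n hn h; rw [e0, e1]; norm_num
  · obtain ⟨e0, e1⟩ := srg_last3 n hn h; rw [e0, e1]; norm_num

lemma srg_mid (n i j : ℕ) (h2 : j % 2 = 0) (h0 : j ≠ 0)
    (hL : ¬(n % 2 = 1 ∧ j = n - 1)) : srg n i j = -1 := by
  unfold srg; rw [if_neg (by omega), if_neg (by omega)]

lemma srg_row_sum (n i j : ℕ) (hi : i < 2) (h2 : j % 2 = 0) (h0 : 1 ≤ j) :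
    srg n i (j-1) + srg n i (j+1) = 3 := by
  rcases (by omega : j % 4 = 0 ∨ j % 4 = 2) with h4 | h4 <;> interval_cases i
  · rw [srg_03 n (j-1) (by omega), srg_01 n (j+1) (by omega)]; norm_num
  · rw [srg_13 n (j-1) (by omega), srg_11 n (j+1) (by omega)]; norm_num
  · rw [srg_01 n (j-1) (by omega), srg_03 n (j+1) (by omega)]; norm_num
  · rw [srg_11 n (j-1) (by omega), srg_13 n (j+1) (by omega)]; norm_num

lemma srg_ineq (n i j : ℕ) (hi : i < 2) (hj : j < n) (hn : 2 ≤ n) :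
    1 ≤ srg n i j + (srg n (1-i) j + ((if 1 ≤ j then srg n i (j-1) else 0)
      + (if j+1 < n then srg n i (j+1) else 0))) := by
  by_cases hodd : j % 2 = 1
  · have hab : srg n i j + srg n (1-i) j = 3 := by
      interval_cases i
      · exact srg_odd_sum n j hodd
      · rw [add_comm]; exact srg_odd_sum n j hodd
    have h3 := srg_ge n i (j-1)
    have h4 := srg_ge n i (j+1)
    split_ifs <;> linarith
  · have hj0 : j % 2 = 0 := by omega
    by_cases h0 : j = 0
    · subst h0
      rw [if_neg (by omega), if_pos (by omega)]
      have h1 : 1 ≤ srg n i (0+1) := srg_odd_ge n i 1 (by omega) hi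
      have hA : srg n i 0 + srg n (1-i) 0 = 0 := by
        interval_cases i
        · rw [srg_zero0 n hn]; rw [show 1 - 0 = 1 from rfl, srg_zero1 n]; norm_num
        · rw [srg_zero1 n]; rw [show 1 - 1 = 0 from rfl, srg_zero0 n hn]; norm_num
      linarith
    · by_cases hL : n % 2 = 1 ∧ j = n - 1
      · obtain ⟨hno, hjl⟩ := hL
        subst hjl
        rw [if_pos (by omega), if_neg (by omega)]
        have hA : srg n (0:ℕ) (n-1) + srg n 1 (n-1) = 0 := srg_last_sum n hn hno
        have hA' : srg n i (n-1) + srg n (1-i) (n-1) = 0 := by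
          interval_cases i
          · exact hA
          · rw [add_comm]; exact hA
        have hc : 1 ≤ srg n i (n-1-1) := srg_odd_ge n i (n-1-1) (by omega) hi
        linarith
      · have hd : j + 1 < n := by omega
        rw [if_pos (by omega), if_pos hd]
        have hrow := srg_row_sum n i j hi hj0 (by omega)
        have h1 := srg_ge n i j
        have h2 := srg_ge n (1-i) j
        linarith

lemma srg_exc (n i j : ℕ) (h2 : j % 2 = 0)
    (hx : (i = 1 ∧ j = 0) ∨
      (n % 2 = 1 ∧ j = n - 1 ∧ ((n % 4 = 1 ∧ i = 0) ∨ (n % 4 = 3 ∧ i = 1)))) :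
    srg n i j = 1 := by
  unfold srg; rw [if_neg (by omega), if_pos hx]

lemma srg_neighbor2 (n i j : ℕ) (hi : i < 2) (hj : j < n) (hn : 2 ≤ n)
    (h : srg n i j = -1) : ∃ k, k < n ∧ (j+1 = k ∨ k+1 = j) ∧ srg n i k = 2 := by
  have h2 : j % 2 = 0 := by
    by_contra hodd
    have := srg_odd_ge n i j (by omega) hi
    omega
  have hexc : ¬((i = 1 ∧ j = 0) ∨
      (n % 2 = 1 ∧ j = n - 1 ∧ ((n % 4 = 1 ∧ i = 0) ∨ (n % 4 = 3 ∧ i = 1)))) := by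
    intro hx
    rw [srg_exc n i j h2 hx] at h
    omega
  refine ⟨if (j % 4 = 0 ∧ i = 0) ∨ (j % 4 = 2 ∧ i = 1) then j+1 else j-1, ?_, ?_, ?_⟩
  · split_ifs with hc <;> omega
  · split_ifs with hc
    · exact Or.inl rfl
    · right; omega
  · split_ifs with hc
    · interval_cases i
      · exact srg_01 n (j+1) (by omega)
      · exact srg_13 n (j+1) (by omega)
    · interval_cases i
      · exact srg_01 n (j-1) (by omega)
      · exact srg_13 n (j-1) (by omega)

/-! ### Counting -/

lemma sumH_neg (m : ℕ) :
    ∑ j ∈ Finset.range m, (if j % 2 = 1 then 0 else if j = 0 then 1 else 2) = 2*((m+1)/2) - 1 := by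
  induction m with
  | zero => simp
  | succ m ih => rw [Finset.sum_range_succ, ih]; split_ifs <;> omega

lemma sumH_two (m : ℕ) :
    ∑ j ∈ Finset.range m, (if j % 2 = 1 then 1 else 0) = m / 2 := by
  induction m with
  | zero => simp
  | succ m ih => rw [Finset.sum_range_succ, ih]; split_ifs <;> omega

lemma sumH_one (m : ℕ) :
    ∑ j ∈ Finset.range m, (if j % 2 = 1 then 1 else if j = 0 then 1 else 0) = m / 2 + min m 1 := by
  induction m with
  | zero => simp
  | succ m ih => rw [Finset.sum_range_succ, ih]; split_ifs <;> omega

lemma srg_col (n j : ℕ) (hn : 2 ≤ n) (hj : j < n) (c : ℤ) :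
    ((if srg n 0 j = c then 1 else 0) + (if srg n 1 j = c then 1 else 0) : ℕ)
      = if j % 2 = 1 then ((if (2:ℤ) = c then 1 else 0) + (if (1:ℤ) = c then 1 else 0))
        else if j = 0 ∨ (n % 2 = 1 ∧ j = n - 1) then
          ((if (-1:ℤ) = c then 1 else 0) + (if (1:ℤ) = c then 1 else 0))
        else (if (-1:ℤ) = c then 2 else 0) := by
  rcases (by omega : j % 4 = 1 ∨ j % 4 = 3 ∨ j % 2 = 0) with h | h | h
  · rw [srg_01 n j h, srg_11 n j h]
    split_ifs <;> first | omega | simp_all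
  · rw [srg_03 n j h, srg_13 n j h]
    split_ifs <;> first | omega | simp_all
  · by_cases h0 : j = 0
    · subst h0
      rw [srg_zero0 n hn, srg_zero1 n]
      split_ifs <;> first | omega | simp_all
    · by_cases hL : n % 2 = 1 ∧ j = n - 1
      · obtain ⟨hno, hjl⟩ := hL
        subst hjl
        rcases (by omega : n % 4 = 1 ∨ n % 4 = 3) with h4 | h4
        · obtain ⟨e0, e1⟩ := srg_last1 n hn h4
          rw [e0, e1]
          split_ifs <;> first | omega | simp_all
        · obtain ⟨e0, e1⟩ := srg_last3 n hn h4
          rw [e0, e1]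
          split_ifs <;> first | omega | simp_all
      · rw [srg_mid n 0 j h h0 hL, srg_mid n 1 j h h0 hL]
        split_ifs <;> first | omega | simp_all

lemma srg_count (n : ℕ) (hn : 2 ≤ n) (c : ℤ) :
    (Finset.univ.filter fun v : Fin 2 × Fin n => srg n v.1 v.2 = c).card
      = ∑ j ∈ Finset.range n,
        ((if srg n 0 j = c then 1 else 0) + (if srg n 1 j = c then 1 else 0)) := by
  rw [Finset.card_filter, Fintype.sum_prod_type, Fin.sum_univ_two, ← Finset.sum_add_distrib]
  dsimp only
  simp only [Fin.val_zero, Fin.val_one]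
  rw [Fin.sum_univ_eq_sum_range
    (fun j => (if srg n 0 j = c then 1 else 0) + (if srg n 1 j = c then 1 else 0)) n]

theorem stmt9 (n : ℕ) (hn : 2 ≤ n) :
    (∃ f : Fin 2 × Fin n → ℤ, IsSRDF (ladderGraph n) f ∧
      (Finset.univ.filter fun v => f v = -1).card = n - 1 ∧
      (Finset.univ.filter fun v => f v = 2).card = n / 2 ∧
      (Finset.univ.filter fun v => f v = 1).card =
        (if Even n then n / 2 + 1 else n / 2 + 2)) ∧
    gammaSR (ladderGraph n) ≤ ((n + 2) / 2 : ℕ) + 1 := by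
  -- the three cardinalities
  have hA : (Finset.univ.filter fun v : Fin 2 × Fin n => srg n v.1 v.2 = -1).card = n - 1 := by
    rw [srg_count n hn (-1)]
    obtain ⟨m, hm⟩ : ∃ m, n = m + 1 := ⟨n - 1, by omega⟩
    subst hm
    rw [Finset.sum_range_succ]
    have hmid : ∀ j ∈ Finset.range m,
        ((if srg (m+1) 0 j = -1 then 1 else 0) + (if srg (m+1) 1 j = -1 then 1 else 0) : ℕ)
          = (if j % 2 = 1 then 0 else if j = 0 then 1 else 2) := by
      intro j hj
      rw [Finset.mem_range] at hj
      rw [srg_col (m+1) j hn (by omega) (-1)]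
      split_ifs <;> first | omega | contradiction
    rw [Finset.sum_congr rfl hmid, sumH_neg m, srg_col (m+1) m hn (by omega) (-1)]
    split_ifs <;> first | omega | contradiction
  have hB : (Finset.univ.filter fun v : Fin 2 × Fin n => srg n v.1 v.2 = 2).card = n / 2 := by
    rw [srg_count n hn 2]
    obtain ⟨m, hm⟩ : ∃ m, n = m + 1 := ⟨n - 1, by omega⟩
    subst hm
    rw [Finset.sum_range_succ]
    have hmid : ∀ j ∈ Finset.range m,
        ((if srg (m+1) 0 j = 2 then 1 else 0) + (if srg (m+1) 1 j = 2 then 1 else 0) : ℕ)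
          = (if j % 2 = 1 then 1 else 0) := by
      intro j hj
      rw [Finset.mem_range] at hj
      rw [srg_col (m+1) j hn (by omega) 2]
      split_ifs <;> first | omega | contradiction
    rw [Finset.sum_congr rfl hmid, sumH_two m, srg_col (m+1) m hn (by omega) 2]
    split_ifs <;> first | omega | contradiction
  have hC : (Finset.univ.filter fun v : Fin 2 × Fin n => srg n v.1 v.2 = 1).card
      = (if Even n then n / 2 + 1 else n / 2 + 2) := by
    rw [srg_count n hn 1]
    obtain ⟨m, hm⟩ : ∃ m, n = m + 1 := ⟨n - 1, by omega⟩
    subst hm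
    rw [Finset.sum_range_succ]
    have hmid : ∀ j ∈ Finset.range m,
        ((if srg (m+1) 0 j = 1 then 1 else 0) + (if srg (m+1) 1 j = 1 then 1 else 0) : ℕ)
          = (if j % 2 = 1 then 1 else if j = 0 then 1 else 0) := by
      intro j hj
      rw [Finset.mem_range] at hj
      rw [srg_col (m+1) j hn (by omega) 1]
      split_ifs <;> first | omega | contradiction
    rw [Finset.sum_congr rfl hmid, sumH_one m, srg_col (m+1) m hn (by omega) 1]
    rcases Nat.even_or_odd (m+1) with he | he
    · rw [if_pos he]
      have h2 := Nat.even_iff.mp he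
      split_ifs <;> first | omega | contradiction
    · rw [if_neg (Nat.not_even_iff_odd.mpr he)]
      have h2 := Nat.odd_iff.mp he
      split_ifs <;> first | omega | contradiction
  -- the SRDF property
  have hSR : IsSRDF (ladderGraph n) (fun v => srg n v.1 v.2) := by
    refine ⟨fun v => srg_values n v.1 v.2, ?_, ?_⟩
    · rintro ⟨i, j⟩
      show 1 ≤ srg n i j + ∑ v ∈ Finset.univ.filter ((ladderGraph n).Adj (i, j)), srg n v.1 v.2
      rw [ladder_nbr_sum n (srg n) i j]
      exact srg_ineq n i j i.isLt j.isLt hn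
    · rintro ⟨i, j⟩ hu
      obtain ⟨k, hk, hadj, hk2⟩ := srg_neighbor2 n i j i.isLt j.isLt hn hu
      refine ⟨(i, ⟨k, hk⟩), ?_, hk2⟩
      rw [ladder_adj']
      exact Or.inr ⟨hadj, rfl⟩
  -- the weight
  have hw : ∑ v : Fin 2 × Fin n, srg n v.1 v.2 =
      2 * ((Finset.univ.filter fun v : Fin 2 × Fin n => srg n v.1 v.2 = 2).card : ℤ)
      + ((Finset.univ.filter fun v : Fin 2 × Fin n => srg n v.1 v.2 = 1).card : ℤ)
      - ((Finset.univ.filter fun v : Fin 2 × Fin n => srg n v.1 v.2 = -1).card : ℤ) := by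
    have hpt : ∀ v : Fin 2 × Fin n, srg n v.1 v.2 =
        (if srg n v.1 v.2 = 2 then (2:ℤ) else 0) + (if srg n v.1 v.2 = 1 then 1 else 0)
          + (if srg n v.1 v.2 = -1 then -1 else 0) := by
      intro v; rcases srg_values n v.1 v.2 with h | h | h <;> rw [h] <;> norm_num
    rw [Finset.sum_congr rfl fun v _ => hpt v, Finset.sum_add_distrib, Finset.sum_add_distrib,
      ← Finset.sum_filter, ← Finset.sum_filter, ← Finset.sum_filter,
      Finset.sum_const, Finset.sum_const, Finset.sum_const]
    push_cast [nsmul_eq_mul]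
    ring
  refine ⟨⟨fun v => srg n v.1 v.2, hSR, hA, hB, hC⟩, ?_⟩
  have hmem : (∑ v : Fin 2 × Fin n, srg n v.1 v.2)
      ∈ {w : ℤ | ∃ f, IsSRDF (ladderGraph n) f ∧ ∑ v, f v = w} :=
    ⟨fun v => srg n v.1 v.2, hSR, rfl⟩
  have hbdd : BddBelow {w : ℤ | ∃ f, IsSRDF (ladderGraph n) f ∧ ∑ v, f v = w} := by
    refine ⟨-(2 * (n:ℤ)), ?_⟩
    rintro w ⟨g, hg, rfl⟩
    have h1 : ∀ v ∈ (Finset.univ : Finset (Fin 2 × Fin n)), (-1:ℤ) ≤ g v := by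
      intro v _; rcases hg.1 v with h | h | h <;> rw [h] <;> norm_num
    have h2 := Finset.sum_le_sum h1
    rw [Finset.sum_const] at h2
    have h3 : (Finset.univ : Finset (Fin 2 × Fin n)).card = 2 * n := by
      simp [Finset.card_univ]
    rw [h3] at h2
    simp only [nsmul_eq_mul] at h2
    push_cast at h2 ⊢
    linarith
  have hle : gammaSR (ladderGraph n) ≤ ∑ v : Fin 2 × Fin n, srg n v.1 v.2 :=
    csInf_le hbdd hmem
  refine le_trans hle ?_
  rw [hw, hA, hB, hC]
  rcases Nat.even_or_odd n with he | he
  · rw [if_pos he]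
    have h2 := Nat.even_iff.mp he
    omega
  · rw [if_neg (by simpa [Nat.odd_iff, Nat.even_iff] using he)]
    have h2 := Nat.odd_iff.mp he
    omega
end
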